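/- A connected finite matroid M is a generalized Catalan matroid if and only if the nontrivial connected flats of M are linearly ordered by inclusion, i.e., for any two nontrivial connected flats F and F′ of M, either F ⊆ F′ or F′ ⊆ F. -/

import Mathlib

open Set
open scoped Matroid

namespace LPM

variable {α β : Type*}

/-- `I` is a partial transversal of the set family `N`: there is an injection
matching each element of `I` to an index of a member of the family containing it. -/
def IsPT {ι : Type*} (N : ι → Set α) (I : Set α) : Prop :=
  ∃ f : I → ι, Function.Injective f ∧ ∀ x : I, (x : α) ∈ N (f x)

/-- `I` is a (full) transversal of the set family `N`: there is a bijection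
matching each element of `I` to an index of a member of the family containing it. -/
def IsT {ι : Type*} (N : ι → Set α) (I : Set α) : Prop :=
  ∃ f : I → ι, Function.Bijective f ∧ ∀ x : I, (x : α) ∈ N (f x)

/-- A lattice path presentation with nullity `m` and rank `r`: a sequence of
intervals `[l i, g i] ⊆ {1, …, m + r}` whose left endpoints strictly increase
and whose right endpoints strictly increase. -/
structure LPP (m r : ℕ) where
  l : Fin r → ℕ
  g : Fin r → ℕ
  l_strictMono : StrictMono l
  g_strictMono : StrictMono g
  one_le_l : ∀ i, 1 ≤ l i
  l_le_g : ∀ i, l i ≤ g i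
  g_le : ∀ i, g i ≤ m + r

/-- The intervals of a lattice path presentation. -/
def LPP.N {m r : ℕ} (P : LPP m r) (i : Fin r) : Set ℕ := Set.Icc (P.l i) (P.g i)

/-- `M` is the lattice path matroid `M[N]` of the presentation `P`: the ground set
is `{1, …, m + r}` and the independent sets are exactly the partial transversals
of the intervals of `P`. -/
def IsLPMOf {m r : ℕ} (P : LPP m r) (M : Matroid ℕ) : Prop :=
  M.E = Set.Icc 1 (m + r) ∧
    ∀ I : Set ℕ, M.Indep I ↔ I ⊆ Set.Icc 1 (m + r) ∧ IsPT P.N I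

/-- `M` is isomorphic to `M'`: there is a bijection between the ground sets
carrying independent sets to independent sets in both directions. -/
def IsoTo (M : Matroid α) (M' : Matroid β) : Prop :=
  ∃ f : α → β, Set.BijOn f M.E M'.E ∧ ∀ I ⊆ M.E, (M.Indep I ↔ M'.Indep (f '' I))

/-- A lattice path matroid: a matroid isomorphic to `M[N]` for some lattice path
presentation (presentations with `r = 0` give the rank-zero matroids). -/
def IsLPMatroid (M : Matroid α) : Prop :=
  ∃ (m r : ℕ) (P : LPP m r) (M₀ : Matroid ℕ), IsLPMOf P M₀ ∧ IsoTo M M₀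

/-- A circuit of a matroid: a minimal dependent subset of the ground set. -/
def Circuit (M : Matroid α) (C : Set α) : Prop :=
  C ⊆ M.E ∧ ¬ M.Indep C ∧ ∀ D : Set α, D ⊂ C → M.Indep D

/-- A matroid is connected if every two distinct elements of the ground set lie
in a common circuit. -/
def Connected (M : Matroid α) : Prop :=
  ∀ x ∈ M.E, ∀ y ∈ M.E, x ≠ y → ∃ C, Circuit M C ∧ x ∈ C ∧ y ∈ C

/-- The rank of a set in a matroid: the supremum of the cardinalities of its
independent subsets. -/
noncomputable def rk (M : Matroid α) (X : Set α) : ℕ :=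
  sSup {n | ∃ I, I ⊆ X ∧ M.Indep I ∧ I.ncard = n}

/-- A nontrivial connected flat: a flat that is dependent and whose restriction
is a connected matroid. -/
def NTConnFlat (M : Matroid α) (X : Set α) : Prop :=
  M.IsFlat X ∧ ¬ M.Indep X ∧ Connected (M ↾ X)

/-- Deletion of a set from a matroid. -/
def delete (M : Matroid α) (D : Set α) : Matroid α := M ↾ (M.E \ D)

/-- Contraction of a set in a matroid, defined via duality. -/
def contract (M : Matroid α) (C : Set α) : Matroid α := (delete M✶ C)✶

/-- `Minor M' M` means that `M'` is obtained from `M` by a sequence of deletions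
and contractions. -/
inductive Minor : Matroid α → Matroid α → Prop
  | refl (M : Matroid α) : Minor M M
  | del {M' M : Matroid α} (D : Set α) (h : Minor M' M) : Minor (delete M' D) M
  | con {M' M : Matroid α} (C : Set α) (h : Minor M' M) : Minor (contract M' C) M

end LPM

/-- A generalized Catalan matroid: a matroid isomorphic to `M[N]` for a lattice
path presentation with `g i = m + i` for all `i` (the lower bounding path is
`E^m N^r`); the case `r = 0` gives the rank-zero matroids. -/
def LPM.IsGCM {α : Type*} (M : Matroid α) : Prop :=
  ∃ (m r : ℕ) (P : LPM.LPP m r) (M₀ : Matroid ℕ),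
    (∀ i : Fin r, P.g i = m + (i : ℕ) + 1) ∧ LPM.IsLPMOf P M₀ ∧ LPM.IsoTo M M₀

/-!
Both directions go through matroids whose independence is decided by prefix counts: for an
injection `φ` of the ground set into `ℕ` and a bound `τ`, a set `I` is independent iff
`|φ(I) ∩ [0, t]| ≤ τ t` for every `t`. For a presentation with `g_i = m + i`, a greedy
matching shows that the partial transversals are exactly the sets bounded by
`t ↦ #{i | l_i ≤ t}`, so generalized Catalan matroids are of this form.

In such a matroid every nontrivial connected flat `F` is an initial segment of `φ`. A circuit
`C ⊆ F` through `y` lies inside a prefix that it overfills; replacing `y` by some `x ∉ F` with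
`φ x ≤ φ y` keeps that prefix overfull, yet `C - y + x` is independent because `F` is a flat.
Initial segments form a chain.

Conversely, if the nontrivial connected flats form a chain, order the ground set so that all of
them are initial segments, and let `τ c` be the least value of `r(F) + (c - |F|)` over these
flats together with `∅` and `E`. Independent sets satisfy these bounds. A dependent set `X`
contains a circuit `C`; since sharing a circuit is transitive, `cl(C)` is a nontrivial
connected flat of a connected matroid, of rank `|C| - 1`, so `X` overfills the prefix of
length `|cl C|`. Finally, `τ` climbs from `0` to `r(M)` in steps of at most one and never lags
behind the identity by more than the nullity `m`; exactly such functions count the left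
endpoints of presentations with `g_i = m + i`.
-/

open Matroid
open scoped Finset

namespace Matroid

variable {α : Type*} {M : Matroid α} {C₁ C₂ : Set α} {x z : α}

lemma IsCircuit.exists_isCircuit_subset_union [M.Finitary] (hC₁ : M.IsCircuit C₁)
    (hC₂ : M.IsCircuit C₂) (hx : x ∈ C₁) (hz : z ∈ C₂)
    (hmeet : (C₁ ∩ C₂).Nonempty) :
    ∃ C ⊆ C₁ ∪ C₂, M.IsCircuit C ∧ x ∈ C ∧ z ∈ C := by
  induction hn : (C₁ ∪ C₂).ncard using Nat.strong_induction_on generalizing C₁ C₂ with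
  | _ n ih =>
  by_cases hzC₁ : z ∈ C₁
  · exact ⟨C₁, subset_union_left, hC₁, hx, hzC₁⟩
  by_cases hxC₂ : x ∈ C₂
  · exact ⟨C₂, subset_union_right, hC₂, hxC₂, hz⟩
  obtain ⟨e, he₁, he₂⟩ := hmeet
  obtain ⟨C₃, hC₃sub, hC₃, hxC₃⟩ := hC₁.strong_elimination hC₂ he₁ he₂ hx hxC₂
  by_cases hzC₃ : z ∈ C₃
  · exact ⟨C₃, hC₃sub.trans sdiff_subset, hC₃, hxC₃, hzC₃⟩
  obtain ⟨g, hgC₃, hgC₁⟩ : ∃ g ∈ C₃, g ∉ C₁ := by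
    by_contra! h
    exact (hC₃sub (hC₃.eq_of_subset_isCircuit hC₁ h ▸ he₁)).2 rfl
  have hgC₂ : g ∈ C₂ := (hC₃sub hgC₃).1.resolve_left hgC₁
  -- eliminating `g` yields a circuit through `z` that still meets `C₁` but misses `g ∈ C₂`
  obtain ⟨C₄, hC₄sub, hC₄, hzC₄⟩ :=
    hC₂.strong_elimination hC₃ hgC₂ hgC₃ hz hzC₃
  have hC₄sub' : C₄ ⊆ (C₁ ∪ C₂) \ {g} := fun a ha =>
    ⟨(hC₄sub ha).1.elim Or.inr fun h => (hC₃sub h).1, (hC₄sub ha).2⟩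
  have hmeet' : (C₁ ∩ C₄).Nonempty := by
    by_contra h
    have hC₄C₂ : C₄ ⊆ C₂ := fun a ha =>
      (hC₄sub' ha).1.resolve_left fun haC₁ => h ⟨a, haC₁, ha⟩
    exact (hC₄sub' (hC₄.eq_of_subset_isCircuit hC₂ hC₄C₂ ▸ hgC₂)).2 rfl
  have hlt : (C₁ ∪ C₄).ncard < n := hn ▸ ncard_lt_ncard
    ⟨union_subset subset_union_left (hC₄sub'.trans sdiff_subset),
      fun h => (h (subset_union_right hgC₂)).elim hgC₁ fun h' => (hC₄sub' h').2 rfl⟩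
    (hC₁.finite.union hC₂.finite)
  obtain ⟨C, hCsub, hC, hxC, hzC⟩ := ih _ hlt hC₁ hC₄ hx hzC₄ hmeet' rfl
  exact ⟨C, hCsub.trans (union_subset subset_union_left (hC₄sub'.trans sdiff_subset)), hC,
    hxC, hzC⟩

end Matroid

namespace LPM

variable {α : Type*} {M : Matroid α} {C F I X Y : Set α} {y : α}

lemma circuit_iff_isCircuit : Circuit M C ↔ M.IsCircuit C := by
  rw [isCircuit_iff_forall_ssubset, Dep, Circuit]
  tauto

lemma circuit_restrict_iff (hX : X ⊆ M.E) :
    Circuit (M ↾ X) C ↔ M.IsCircuit C ∧ C ⊆ X := by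
  rw [circuit_iff_isCircuit, restrict_isCircuit_iff hX]

lemma Connected.restrict_closure [M.Finitary] (hM : Connected M) (hC : M.IsCircuit C) :
    Connected (M ↾ M.closure C) := by
  have hCcl : C ⊆ M.closure C := M.subset_closure C hC.subset_ground
  have hmeet : ∀ z ∈ M.closure C,
      ∃ D ⊆ M.closure C, M.IsCircuit D ∧ z ∈ D ∧ (D ∩ C).Nonempty := by
    intro z hz
    by_cases hzC : z ∈ C
    · exact ⟨C, hCcl, hC, hzC, by rw [inter_self]; exact hC.nonempty⟩
    obtain ⟨c, hc⟩ := hC.nonempty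
    -- connectivity forbids loops outside `C`
    have hz_nonloop : ¬ M.IsLoop z := by
      intro hloop
      obtain ⟨D, hD, hzD, hcD⟩ := hM z (M.closure_subset_ground C hz) c (hC.subset_ground hc)
        fun h => hzC (h ▸ hc)
      have hDz := (singleton_isCircuit.2 hloop).eq_of_subset_isCircuit
        (circuit_iff_isCircuit.1 hD) (singleton_subset_iff.2 hzD)
      rw [← hDz, mem_singleton_iff] at hcD
      exact hzC (hcD ▸ hc)
    have hzcl : z ∈ M.closure (C \ {c}) := by rwa [hC.closure_sdiff_singleton_eq]
    have hzI : z ∉ C \ {c} := fun h => hzC h.1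
    have hD := (hC.sdiff_singleton_indep hc).fundCircuit_isCircuit hzcl hzI
    have hDsub := M.fundCircuit_subset_insert z (C \ {c})
    refine ⟨_, hDsub.trans (insert_subset hz (sdiff_subset.trans hCcl)), hD,
      M.mem_fundCircuit z _, ?_⟩
    obtain ⟨d, hdD, hdz⟩ : ∃ d ∈ M.fundCircuit z (C \ {c}), d ≠ z := by
      by_contra! h
      rw [eq_singleton_iff_unique_mem.2 ⟨M.mem_fundCircuit z _, h⟩] at hD
      exact hz_nonloop (singleton_isCircuit.1 hD)
    exact ⟨d, hdD, ((hDsub hdD).resolve_left hdz).1⟩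
  intro x hx y hy hxy
  obtain ⟨Dx, hDxcl, hDx, hxDx, c, hcDx, hcC⟩ := hmeet x hx
  obtain ⟨Dy, hDycl, hDy, hyDy, hDyC⟩ := hmeet y hy
  obtain ⟨D', hD'sub, hD', hyD', hcD'⟩ := hDy.exists_isCircuit_subset_union hC hyDy hcC hDyC
  obtain ⟨D, hDsub, hD, hxD, hyD⟩ :=
    hDx.exists_isCircuit_subset_union hD' hxDx hyD' ⟨c, hcDx, hcD'⟩
  have hDcl : D ⊆ M.closure C := hDsub.trans (union_subset hDxcl
    (hD'sub.trans (union_subset hDycl hCcl)))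
  exact ⟨D, (circuit_restrict_iff (M.closure_subset_ground C)).2 ⟨hD, hDcl⟩, hxD, hyD⟩

lemma NTConnFlat.exists_isCircuit_mem (hF : NTConnFlat M F) (hy : y ∈ F) :
    ∃ C ⊆ F, M.IsCircuit C ∧ y ∈ C := by
  obtain ⟨hflat, hdep, hconn⟩ := hF
  obtain ⟨C, hCF, hC⟩ :=
    (show M.Dep F from ⟨hdep, hflat.subset_ground⟩).exists_isCircuit_subset
  obtain ⟨c, hc⟩ := hC.nonempty
  obtain rfl | hcy := eq_or_ne c y
  · exact ⟨C, hCF, hC, hc⟩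
  obtain ⟨D, hD, hyD, -⟩ := hconn y hy c (hCF hc) hcy.symm
  obtain ⟨hD, hDF⟩ := (circuit_restrict_iff hflat.subset_ground).1 hD
  exact ⟨D, hDF, hD, hyD⟩

section Rank

lemma cast_rk_eq_eRk [M.RankFinite] (X : Set α) : (rk M X : ℕ∞) = M.eRk X := by
  obtain ⟨I, hI⟩ := M.exists_isBasis' X
  have hIfin : I.Finite := hI.indep.finite
  have hmax : IsGreatest {n | ∃ J, J ⊆ X ∧ M.Indep J ∧ J.ncard = n} I.ncard := by
    refine ⟨⟨I, hI.subset, hI.indep, rfl⟩, ?_⟩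
    rintro _ ⟨J, hJX, hJ, rfl⟩
    have := hJ.encard_le_eRk_of_subset hJX
    rw [← hI.encard_eq_eRk, ← hJ.finite.cast_ncard_eq, ← hIfin.cast_ncard_eq] at this
    exact_mod_cast this
  rw [rk, hmax.csSup_eq, hIfin.cast_ncard_eq, hI.encard_eq_eRk]

lemma ncard_le_rk [M.RankFinite] (hI : M.Indep I) (hIX : I ⊆ X) : I.ncard ≤ rk M X := by
  have := hI.encard_le_eRk_of_subset hIX
  rw [← hI.finite.cast_ncard_eq, ← cast_rk_eq_eRk] at this
  exact_mod_cast this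

lemma rk_empty [M.RankFinite] : rk M ∅ = 0 := by
  exact_mod_cast (cast_rk_eq_eRk (M := M) ∅).trans M.eRk_empty

lemma rk_le_rk_add_ncard_sdiff [M.Finite] (hYX : Y ⊆ X) (hX : X ⊆ M.E) :
    rk M X ≤ rk M Y + (X \ Y).ncard := by
  have h := (M.eRk_le_eRk_add_eRk_sdiff hYX).trans (add_le_add le_rfl (M.eRk_le_encard (X \ Y)))
  rw [← cast_rk_eq_eRk, ← cast_rk_eq_eRk,
    ← (M.set_finite (X \ Y) (sdiff_subset.trans hX)).cast_ncard_eq] at h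
  exact_mod_cast h

lemma rk_closure_add_one_of_isCircuit [M.RankFinite] (hC : M.IsCircuit C) :
    rk M (M.closure C) + 1 = C.ncard := by
  have := hC.eRk_add_one_eq
  rw [← M.eRk_closure_eq, ← cast_rk_eq_eRk, ← hC.finite.cast_ncard_eq] at this
  exact_mod_cast this

end Rank

lemma exists_ntConnFlat_rk_lt [M.Finite] (hM : Connected M) (hX : X ⊆ M.E)
    (hdep : ¬ M.Indep X) : ∃ F, NTConnFlat M F ∧ rk M F < (X ∩ F).ncard := by
  obtain ⟨C, hCX, hC⟩ := (show M.Dep X from ⟨hdep, hX⟩).exists_isCircuit_subset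
  have hCcl : C ⊆ M.closure C := M.subset_closure C hC.subset_ground
  refine ⟨M.closure C, ⟨isFlat_closure C, fun h => hC.not_indep (h.subset hCcl),
    hM.restrict_closure hC⟩, ?_⟩
  have := rk_closure_add_one_of_isCircuit hC
  have := ncard_le_ncard (subset_inter hCX hCcl) ((M.set_finite X hX).inter_of_left _)
  omega

section Ordering

variable {α β : Type*} [LinearOrder β] {E S : Set α} {key : α → β} {a b : α}

noncomputable def rankIn (E : Set α) (key : α → β) (a : α) : ℕ :=
  {b ∈ E | key b < key a}.ncard + 1

lemma rankIn_lt_rankIn (hE : E.Finite) (ha : a ∈ E) (hab : key a < key b) :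
    rankIn E key a < rankIn E key b := by
  have hss : {c ∈ E | key c < key a} ⊂ {c ∈ E | key c < key b} :=
    ⟨fun c hc => ⟨hc.1, hc.2.trans hab⟩, fun h => (h ⟨ha, hab⟩).2.false⟩
  have := ncard_lt_ncard hss (hE.sep _)
  unfold rankIn
  omega

lemma injOn_rankIn (hE : E.Finite) (hkey : InjOn key E) : InjOn (rankIn E key) E := by
  intro a ha b hb h
  by_contra hne
  rcases lt_or_gt_of_ne (hkey.ne ha hb hne) with hlt | hlt
  · exact (rankIn_lt_rankIn hE ha hlt).ne h
  · exact (rankIn_lt_rankIn hE hb hlt).ne' h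

lemma rankIn_le_ncard_iff (hE : E.Finite) (hSE : S ⊆ E)
    (hS : ∀ a ∈ S, ∀ b ∈ E \ S, key a < key b) (ha : a ∈ E) :
    rankIn E key a ≤ S.ncard ↔ a ∈ S := by
  unfold rankIn
  constructor
  · intro h
    by_contra haS
    have hsub : S ⊆ {b ∈ E | key b < key a} := fun b hb => ⟨hSE hb, hS b hb a ⟨ha, haS⟩⟩
    have := ncard_le_ncard hsub (hE.sep _)
    omega
  · intro haS
    have hsub : {b ∈ E | key b < key a} ⊆ S \ {a} := fun b ⟨hbE, hlt⟩ =>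
      ⟨by_contra fun hbS => (hS a haS b ⟨hbE, hbS⟩).not_gt hlt, fun h => hlt.ne (h ▸ rfl)⟩
    have := ncard_le_ncard hsub (hE.subset hSE).sdiff
    rw [ncard_sdiff_singleton_of_mem haS] at this
    have := (ncard_pos (hE.subset hSE)).2 ⟨a, haS⟩
    omega

lemma image_rankIn (hE : E.Finite) (hkey : InjOn key E) :
    rankIn E key '' E = Icc 1 E.ncard := by
  refine eq_of_subset_of_ncard_le ?_ ?_ (finite_Icc _ _)
  · rintro _ ⟨a, ha, rfl⟩
    exact ⟨Nat.le_add_left 1 _,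
      (rankIn_le_ncard_iff hE subset_rfl (fun _ _ _ hb => absurd hb.1 hb.2) ha).2 ha⟩
  · rw [ncard_Icc_nat, (injOn_rankIn hE hkey).ncard_image]
    omega

lemma exists_injOn_Icc_of_isChain (hE : E.Finite) {𝒞 : Set (Set α)}
    (h𝒞 : IsChain (· ⊆ ·) 𝒞) (hsub : ∀ F ∈ 𝒞, F ⊆ E) :
    ∃ φ : α → ℕ, InjOn φ E ∧ φ '' E = Icc 1 E.ncard ∧
      ∀ F ∈ 𝒞, ∀ a ∈ E, φ a ≤ F.ncard ↔ a ∈ F := by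
  obtain ⟨tie, htie⟩ := countable_iff_exists_injOn.1 hE.countable
  have h𝒞fin : 𝒞.Finite := hE.finite_subsets.subset hsub
  -- an element of `F ∈ 𝒞` lies outside fewer members of the chain than an element outside `F`
  let ψ : α → ℕ := fun a => {G ∈ 𝒞 | a ∉ G}.ncard
  have hψ : ∀ F ∈ 𝒞, ∀ a ∈ F, ∀ b ∉ F, ψ a < ψ b := by
    intro F hF a haF b hbF
    refine ncard_lt_ncard ⟨fun G ⟨hG, haG⟩ => ⟨hG, fun hbG => ?_⟩,
      fun h => (h ⟨hF, hbF⟩).2 haF⟩ (h𝒞fin.sep _)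
    rcases h𝒞.total hG hF with hGF | hFG
    · exact hbF (hGF hbG)
    · exact haG (hFG haF)
  let key : α → ℕ ×ₗ ℕ := fun a => toLex (ψ a, tie a)
  have hkey : InjOn key E := fun a ha b hb h => htie ha hb (congrArg (fun p => (ofLex p).2) h)
  refine ⟨rankIn E key, injOn_rankIn hE hkey, image_rankIn hE hkey, fun F hF a ha =>
    rankIn_le_ncard_iff hE (hsub F hF) (fun a haF b hb => ?_) ha⟩
  exact Prod.Lex.toLex_lt_toLex.2 (Or.inl (hψ F hF a haF b hb.2))

end Ordering

def PrefixBounded (τ : ℕ → ℕ) (S : Set ℕ) : Prop := ∀ t, (S ∩ Iic t).ncard ≤ τ t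

lemma PrefixBounded.congr {τ τ' : ℕ → ℕ} {S : Set ℕ} {n : ℕ} (h : PrefixBounded τ S)
    (hS : S ⊆ Iic n) (hτ' : Monotone τ') (heq : ∀ t ≤ n, τ t = τ' t) :
    PrefixBounded τ' S := by
  intro t
  rcases le_total t n with htn | hnt
  · exact heq t htn ▸ h t
  · calc (S ∩ Iic t).ncard = (S ∩ Iic n).ncard := by
          rw [inter_eq_left.2 hS, inter_eq_left.2 (hS.trans (Iic_subset_Iic.2 hnt))]
      _ ≤ τ' n := heq n le_rfl ▸ h n
      _ ≤ τ' t := hτ' hnt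

lemma ncard_inter_Iic_of_mem {S : Set ℕ} {x : ℕ} (hx : x ∈ S) :
    (S ∩ Iic x).ncard = (S ∩ Iio x).ncard + 1 := by
  rw [← Iio_insert, inter_insert_of_mem hx,
    ncard_insert_of_notMem (fun h => lt_irrefl x h.2) ((finite_Iio x).inter_of_right S)]

lemma ncard_inter_Iio_lt {S : Set ℕ} {x y : ℕ} (hx : x ∈ S) (hxy : x < y) :
    (S ∩ Iio x).ncard < (S ∩ Iio y).ncard :=
  ncard_lt_ncard ⟨inter_subset_inter_right S (Iio_subset_Iio hxy.le),
    fun h => lt_irrefl x (h ⟨hx, hxy⟩).2⟩ ((finite_Iio y).inter_of_right S)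

namespace LPP

variable {m r : ℕ} (P : LPP m r)

def leftCount (t : ℕ) : ℕ := #{i | P.l i ≤ t}

lemma l_le_iff_lt_leftCount {i : Fin r} {t : ℕ} : P.l i ≤ t ↔ (i : ℕ) < P.leftCount t :=
  (Tuple.lt_card_le_iff_apply_le_of_monotone P.l_strictMono.monotone).symm

lemma leftCount_le (t : ℕ) : P.leftCount t ≤ r :=
  (Finset.card_filter_le _ _).trans (Finset.card_fin r).le

lemma leftCount_mono : Monotone P.leftCount := fun _ _ hst =>
  Finset.card_le_card fun i hi => by
    simp only [Finset.mem_filter, Finset.mem_univ, true_and] at hi ⊢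
    exact hi.trans hst

end LPP

variable {m r : ℕ} {P : LPP m r} {S : Set ℕ}

lemma IsPT.prefixBounded (h : IsPT P.N S) : PrefixBounded P.leftCount S := by
  obtain ⟨f, hf, hmem⟩ := h
  intro t
  let g : ↥(S ∩ Iic t) → {i // P.l i ≤ t} := fun x =>
    ⟨f ⟨x, x.2.1⟩, (hmem _).1.trans x.2.2⟩
  have hg : Function.Injective g := fun x y hxy =>
    Subtype.ext <| congrArg (fun z : S => (z : ℕ)) (hf (congrArg Subtype.val hxy))
  have := Nat.card_le_card_of_injective g hg
  rwa [Nat.card_coe_set_eq, Nat.card_eq_fintype_card, Fintype.card_subtype] at this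

lemma isPT_of_prefixBounded (hg : ∀ i, P.g i = m + (i : ℕ) + 1) (hS : S ⊆ Icc 1 (m + r))
    (h : PrefixBounded P.leftCount S) : IsPT P.N S := by
  -- match `x ∈ S`, preceded by `k` elements of `S`, to the interval `max k (x - m - 1)`
  have hpos : ∀ x ∈ S, (S ∩ Iio x).ncard < P.leftCount x := fun x hx => by
    have := h x
    rw [ncard_inter_Iic_of_mem hx] at this
    omega
  have hlt : ∀ x : S, max (S ∩ Iio x).ncard (x - (m + 1)) < r := fun x => by
    have := hpos x x.2
    have := P.leftCount_le x
    have := (hS x.2).2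
    omega
  refine ⟨fun x => ⟨max (S ∩ Iio x).ncard (x - (m + 1)), hlt x⟩, fun x y hxy => ?_,
    fun x => ⟨?_, ?_⟩⟩
  · have hval := congrArg Fin.val hxy
    simp only at hval
    by_contra hne
    rcases lt_or_gt_of_ne (Subtype.coe_ne_coe.2 hne) with hxy' | hxy'
    · have := ncard_inter_Iio_lt x.2 hxy'
      omega
    · have := ncard_inter_Iio_lt y.2 hxy'
      omega
  · rcases le_or_gt (x - (m + 1)) (S ∩ Iio x).ncard with hle | hgt
    · exact P.l_le_iff_lt_leftCount.2 (by simpa [hle] using hpos x x.2)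
    · refine (P.l_le_g _).trans ?_
      rw [hg]
      simp only
      omega
  · show (x : ℕ) ≤ P.g _
    rw [hg]
    simp only
    omega

lemma exists_LPP_leftCount_eq (τ : ℕ → ℕ) (hmono : Monotone τ) (h0 : τ 0 = 0)
    (hstep : ∀ c, τ (c + 1) ≤ τ c + 1) (htop : τ (m + r) ≤ r)
    (hbot : ∀ c ≤ m + r, c ≤ τ c + m) :
    ∃ P : LPP m r, (∀ i, P.g i = m + (i : ℕ) + 1) ∧
      ∀ t ≤ m + r, P.leftCount t = τ t := by
  classical
  have hex : ∀ i : Fin r, ∃ c, (i : ℕ) < τ c := fun i =>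
    ⟨m + i + 1, by have := hbot (m + i + 1) (by omega); omega⟩
  -- interval `i` starts where `τ` first exceeds `i`
  let l : Fin r → ℕ := fun i => Nat.find (hex i)
  have hl : ∀ i c, l i ≤ c ↔ (i : ℕ) < τ c := fun i c =>
    ⟨fun h => (Nat.find_spec (hex i)).trans_le (hmono h), fun h => Nat.find_min' _ h⟩
  have hl1 : ∀ i, 1 ≤ l i := fun i => by
    by_contra! h
    have := (hl i 0).1 (by omega)
    omega
  refine ⟨⟨l, fun i => m + i + 1, fun i j hij => ?_, fun i j hij => ?_, hl1, fun i => ?_,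
    fun i => ?_⟩, fun i => rfl, fun t ht => ?_⟩
  · have hij : (i : ℕ) < j := hij
    have hj := (hl j (l j)).1 le_rfl
    have hτ := hstep (l j - 1)
    rw [Nat.sub_add_cancel (hl1 j)] at hτ
    have := (hl i (l j - 1)).2 (by omega)
    have := hl1 j
    show l i < l j
    omega
  · have : (i : ℕ) < j := hij
    show m + i + 1 < m + j + 1
    omega
  · exact (hl i _).2 (by have := hbot (m + i + 1) (by omega); omega)
  · have := i.isLt
    show m + i + 1 ≤ m + r
    omega
  · have hτr : τ t ≤ r := (hmono ht).trans htop
    simp only [LPP.leftCount, hl, Fin.card_filter_val_lt, min_eq_right hτr]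

lemma IsLPMOf.indep_iff_prefixBounded {M₀ : Matroid ℕ} (hP : IsLPMOf P M₀)
    (hg : ∀ i, P.g i = m + (i : ℕ) + 1) (hS : S ⊆ M₀.E) :
    M₀.Indep S ↔ PrefixBounded P.leftCount S := by
  rw [hP.2, ← hP.1]
  exact ⟨fun h => h.2.prefixBounded,
    fun h => ⟨hS, isPT_of_prefixBounded hg (hP.1 ▸ hS) h⟩⟩

variable {α β : Type*} {M : Matroid α} {C F F' I : Set α} {x y : α} {φ : α → ℕ}
  {τ : ℕ → ℕ}

lemma lt_of_isCircuit_subset_isFlat [M.Finitary] (hφ : InjOn φ M.E)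
    (hM : ∀ I ⊆ M.E, M.Indep I ↔ PrefixBounded τ (φ '' I)) (hF : M.IsFlat F)
    (hC : M.IsCircuit C) (hCF : C ⊆ F) (hy : y ∈ C) (hx : x ∈ M.E) (hxF : x ∉ F) :
    φ y < φ x := by
  have hCE := hC.subset_ground
  obtain ⟨t, ht⟩ : ∃ t, τ t < (φ '' C ∩ Iic t).ncard := by
    by_contra! h
    exact hC.not_indep ((hM C hCE).2 h)
  -- the part of `C` inside the overfilled prefix is already dependent, hence all of `C`
  have hCt : φ '' C ⊆ Iic t := by
    have hdep : M.Dep (C ∩ φ ⁻¹' Iic t) := by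
      refine ⟨fun hind => ?_, inter_subset_left.trans hCE⟩
      have := (hM _ (inter_subset_left.trans hCE)).1 hind t
      rw [image_inter_preimage, inter_assoc, inter_self] at this
      omega
    rw [← hC.eq_of_dep_subset hdep inter_subset_left, image_inter_preimage]
    exact inter_subset_right
  by_contra! hxy
  have hxC : x ∉ C \ {y} := fun h => hxF (hCF h.1)
  have hind : M.Indep (insert x (C \ {y})) := by
    refine ((hC.sdiff_singleton_indep hy).insert_indep_iff_of_notMem hxC).2
      ⟨hx, fun hcl => hxF ?_⟩
    exact hF.closure.subset (M.closure_subset_closure (sdiff_subset.trans hCF) hcl)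
  have himg : φ '' insert x (C \ {y}) ⊆ Iic t := by
    rw [image_insert_eq]
    exact insert_subset (hxy.trans (hCt (mem_image_of_mem φ hy)))
      ((image_mono sdiff_subset).trans hCt)
  have hbound := (hM _ (insert_subset hx (sdiff_subset.trans hCE))).1 hind t
  rw [inter_eq_left.2 himg, (hφ.mono (insert_subset hx (sdiff_subset.trans hCE))).ncard_image,
    ncard_insert_of_notMem hxC hC.finite.sdiff, ncard_sdiff_singleton_add_one hy hC.finite]
    at hbound
  rw [inter_eq_left.2 hCt, (hφ.mono hCE).ncard_image] at ht
  omega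

lemma ntConnFlat_total [M.Finitary] (hφ : InjOn φ M.E)
    (hM : ∀ I ⊆ M.E, M.Indep I ↔ PrefixBounded τ (φ '' I))
    (hF : NTConnFlat M F) (hF' : NTConnFlat M F') : F ⊆ F' ∨ F' ⊆ F := by
  have hlt : ∀ {F}, NTConnFlat M F → ∀ y ∈ F, ∀ x ∈ M.E \ F, φ y < φ x := by
    intro F hF y hy x hx
    obtain ⟨C, hCF, hC, hyC⟩ := hF.exists_isCircuit_mem hy
    exact lt_of_isCircuit_subset_isFlat hφ hM hF.1 hC hCF hyC hx.1 hx.2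
  by_contra! h
  obtain ⟨a, haF, haF'⟩ := not_subset.1 h.1
  obtain ⟨b, hbF', hbF⟩ := not_subset.1 h.2
  exact (hlt hF a haF b ⟨hF'.1.subset_ground hbF', hbF⟩).asymm
    (hlt hF' b hbF' a ⟨hF.1.subset_ground haF, haF'⟩)

noncomputable def rankProfile (M : Matroid α) (𝒞 : Set (Set α)) (c : ℕ) : ℕ :=
  sInf ((fun F => rk M F + (c - F.ncard)) '' 𝒞)

section RankProfile

variable {𝒞 : Set (Set α)}

lemma rankProfile_le (hF : F ∈ 𝒞) (c : ℕ) :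
    rankProfile M 𝒞 c ≤ rk M F + (c - F.ncard) :=
  Nat.sInf_le ⟨F, hF, rfl⟩

lemma exists_rankProfile_eq (h𝒞 : 𝒞.Nonempty) (c : ℕ) :
    ∃ F ∈ 𝒞, rk M F + (c - F.ncard) = rankProfile M 𝒞 c :=
  Nat.sInf_mem (h𝒞.image _)

lemma rankProfile_mono (h𝒞 : 𝒞.Nonempty) : Monotone (rankProfile M 𝒞) := fun c c' _ => by
  obtain ⟨F, hF, hFeq⟩ := exists_rankProfile_eq (M := M) h𝒞 c'
  have := rankProfile_le (M := M) hF c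
  omega

lemma rankProfile_succ_le (h𝒞 : 𝒞.Nonempty) (c : ℕ) :
    rankProfile M 𝒞 (c + 1) ≤ rankProfile M 𝒞 c + 1 := by
  obtain ⟨F, hF, hFeq⟩ := exists_rankProfile_eq (M := M) h𝒞 c
  have := rankProfile_le (M := M) hF (c + 1)
  omega

lemma le_rankProfile_add [M.Finite] (h𝒞 : 𝒞.Nonempty) (hsub : ∀ F ∈ 𝒞, F ⊆ M.E)
    (c : ℕ) :
    c ≤ rankProfile M 𝒞 c + (M.E.ncard - rk M M.E) := by
  obtain ⟨F, hF, hFeq⟩ := exists_rankProfile_eq (M := M) h𝒞 c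
  have := rk_le_rk_add_ncard_sdiff (hsub F hF) subset_rfl
  have := ncard_sdiff (hsub F hF) (M.set_finite F (hsub F hF))
  have := ncard_le_ncard (hsub F hF) M.ground_finite
  omega

lemma prefixBounded_rankProfile [M.RankFinite] (h𝒞 : 𝒞.Nonempty)
    (hinit : ∀ F ∈ 𝒞, ∀ a ∈ M.E, φ a ≤ F.ncard ↔ a ∈ F) (hI : M.Indep I) :
    PrefixBounded (rankProfile M 𝒞) (φ '' I) := by
  intro c
  obtain ⟨F, hF, hFeq⟩ := exists_rankProfile_eq (M := M) h𝒞 c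
  have hsplit : φ '' I ∩ Iic c ⊆ φ '' (I ∩ F) ∪ Ioc F.ncard c := by
    rintro _ ⟨⟨a, haI, rfl⟩, hac⟩
    by_cases ha : φ a ≤ F.ncard
    · exact Or.inl ⟨a, ⟨haI, (hinit F hF a (hI.subset_ground haI)).1 ha⟩, rfl⟩
    · exact Or.inr ⟨not_le.1 ha, hac⟩
  have hIF : (I ∩ F).Finite := hI.finite.inter_of_left F
  rw [← hFeq]
  calc (φ '' I ∩ Iic c).ncard ≤ (φ '' (I ∩ F) ∪ Ioc F.ncard c).ncard :=
        ncard_le_ncard hsplit ((hIF.image φ).union (finite_Ioc _ _))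
    _ ≤ (φ '' (I ∩ F)).ncard + (Ioc F.ncard c).ncard := ncard_union_le _ _
    _ ≤ rk M F + (c - F.ncard) := by
        rw [ncard_Ioc_nat]
        gcongr
        exact (ncard_image_le hIF).trans
          (ncard_le_rk (hI.subset inter_subset_left) inter_subset_right)

lemma not_prefixBounded_rankProfile (hφ : InjOn φ M.E)
    (hinit : ∀ F ∈ 𝒞, ∀ a ∈ M.E, φ a ≤ F.ncard ↔ a ∈ F) (hIE : I ⊆ M.E)
    (hF : F ∈ 𝒞) (hlt : rk M F < (I ∩ F).ncard) :
    ¬ PrefixBounded (rankProfile M 𝒞) (φ '' I) := by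
  intro hbd
  have hsub : φ '' (I ∩ F) ⊆ φ '' I ∩ Iic F.ncard := by
    rintro _ ⟨a, ⟨haI, haF⟩, rfl⟩
    exact ⟨mem_image_of_mem φ haI, (hinit F hF a (hIE haI)).2 haF⟩
  have := ncard_le_ncard hsub ((finite_Iic _).inter_of_right _)
  rw [(hφ.mono (inter_subset_left.trans hIE)).ncard_image] at this
  have := hbd F.ncard
  have := rankProfile_le (M := M) hF F.ncard
  omega

end RankProfile

lemma isoTo_map {f : α → β} (hf : InjOn f M.E) : IsoTo M (M.map f hf) :=
  ⟨f, hf.bijOn_image, fun _ hI => (map_image_indep_iff hI).symm⟩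

lemma isGCM_of_indep_iff_prefixBounded {m r : ℕ} (P : LPP m r)
    (hg : ∀ i, P.g i = m + (i : ℕ) + 1) (hPτ : ∀ t ≤ m + r, P.leftCount t = τ t)
    (hτ : Monotone τ) (hφ : InjOn φ M.E) (himg : φ '' M.E = Icc 1 (m + r))
    (hM : ∀ I ⊆ M.E, M.Indep I ↔ PrefixBounded τ (φ '' I)) : IsGCM M := by
  have hIcc : Icc 1 (m + r) ⊆ Iic (m + r) := fun _ ht => ht.2
  refine ⟨m, r, P, M.map φ hφ, hg, ⟨himg, fun J => ?_⟩, isoTo_map hφ⟩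
  rw [map_indep_iff]
  constructor
  · rintro ⟨I, hI, rfl⟩
    have hJ : φ '' I ⊆ Icc 1 (m + r) := himg ▸ image_mono hI.subset_ground
    exact ⟨hJ, isPT_of_prefixBounded hg hJ (((hM I hI.subset_ground).1 hI).congr
      (hJ.trans hIcc) P.leftCount_mono fun t ht => (hPτ t ht).symm)⟩
  · rintro ⟨hJ, hPT⟩
    have hJ' : φ '' (M.E ∩ φ ⁻¹' J) = J := by
      rw [image_inter_preimage, himg, inter_eq_right.2 hJ]
    refine ⟨M.E ∩ φ ⁻¹' J, (hM _ inter_subset_left).2 ?_, hJ'.symm⟩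
    rw [hJ']
    exact hPT.prefixBounded.congr (hJ.trans hIcc) hτ hPτ

theorem isGCM_of_ntConnFlat_chain [M.Finite] (hM : Connected M)
    (hchain : ∀ F F', NTConnFlat M F → NTConnFlat M F' → F ⊆ F' ∨ F' ⊆ F) :
    IsGCM M := by
  let 𝒞 : Set (Set α) := insert ∅ (insert M.E {F | NTConnFlat M F})
  have hempty : ∅ ∈ 𝒞 := mem_insert _ _
  have hground : M.E ∈ 𝒞 := mem_insert_of_mem _ (mem_insert _ _)
  have hsub : ∀ F ∈ 𝒞, F ⊆ M.E := by
    rintro F (rfl | rfl | hF)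
    exacts [empty_subset _, subset_rfl, hF.1.subset_ground]
  have h𝒞 : IsChain (· ⊆ ·) 𝒞 :=
    ((show IsChain (· ⊆ ·) {F | NTConnFlat M F} from fun F hF G hG _ => hchain F G hF hG).insert
      fun G hG _ => Or.inr hG.1.subset_ground).insert fun G _ _ => Or.inl (empty_subset G)
  obtain ⟨φ, hφ, himg, hinit⟩ := exists_injOn_Icc_of_isChain M.ground_finite h𝒞 hsub
  have hne : 𝒞.Nonempty := ⟨∅, hempty⟩
  have hrn : rk M M.E ≤ M.E.ncard := by
    simpa [rk_empty] using rk_le_rk_add_ncard_sdiff (empty_subset M.E) subset_rfl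
  obtain ⟨P, hg, hP⟩ := exists_LPP_leftCount_eq (m := M.E.ncard - rk M M.E) (r := rk M M.E)
    (rankProfile M 𝒞) (rankProfile_mono hne)
    (Nat.le_zero.1 ((rankProfile_le hempty 0).trans (by simp [rk_empty])))
    (rankProfile_succ_le hne) ((rankProfile_le hground _).trans (by omega))
    (fun c _ => le_rankProfile_add hne hsub c)
  refine isGCM_of_indep_iff_prefixBounded P hg hP (rankProfile_mono hne) hφ
    (by rwa [Nat.sub_add_cancel hrn]) fun I hI =>
      ⟨prefixBounded_rankProfile hne hinit, fun hbd => by_contra fun hdep => ?_⟩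
  obtain ⟨F, hF, hlt⟩ := exists_ntConnFlat_rk_lt hM hI hdep
  exact not_prefixBounded_rankProfile hφ hinit hI
    (mem_insert_of_mem _ (mem_insert_of_mem _ hF)) hlt hbd

end LPM

open LPM in
/-- A connected finite matroid is a generalized Catalan
matroid iff its nontrivial connected flats are linearly ordered by inclusion. -/
theorem stmt17 {α : Type*} (M : Matroid α) (hfin : M.E.Finite)
    (hconn : Connected M) :
    IsGCM M ↔
      ∀ F F' : Set α, NTConnFlat M F → NTConnFlat M F' → F ⊆ F' ∨ F' ⊆ F := by
  have : M.Finite := ⟨hfin⟩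
  refine ⟨?_, isGCM_of_ntConnFlat_chain hconn⟩
  rintro ⟨m, r, P, M₀, hg, hP, f, hbij, hind⟩ F F' hF hF'
  refine ntConnFlat_total (τ := P.leftCount) hbij.injOn (fun I hI => ?_) hF hF'
  rw [hind I hI, hP.indep_iff_prefixBounded hg (hbij.image_eq ▸ image_mono hI)]
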